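/- arXiv:2511.02095 — 5 statements merged into one kernel-verified Lean document; each statement's English description precedes it below -/
import Mathlib

section
/- Let n ≥ 1, let A₀ be a real n×n matrix and γ ∈ (0,1) with √γ·ρ(A₀) < 1. Let Σ₀ and Σ_w be real n×n matrices and define the second-moment recursion M₀ := Σ₀, M_{k+1} := A₀ M_k A₀ᵀ + Σ_w for k ≥ 0. Then the series Σ := ∑_{k=0}^∞ γᵏ M_k converges and its sum satisfies the discounted Lyapunov equation Σ − γ A₀ Σ A₀ᵀ = Σ₀ + (γ/(1−γ)) Σ_w. -/
/-!
Gelfand's formula turns `ρ(A₀) < r` into `‖A₀ᵏ‖ ≤ C rᵏ`. Choosing `max(ρ(A₀), 1) < r < 1/√γ` and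
unrolling the recursion, `M_k = A₀ᵏ Σ₀ (A₀ᵀ)ᵏ + ∑_{j<k} A₀ʲ Σ_w (A₀ᵀ)ʲ` has norm `O((k+1) r^{2k})`,
so `γᵏ M_k` is dominated by a summable series because `γ r² < 1`. Splitting off the term `k = 0`
of `∑ γᵏ M_k` and applying the recursion to the tail gives the Lyapunov equation.
-/

open Matrix Filter Asymptotics Finset

/-- The spectral radius of a real square matrix: the maximum modulus of its
complex eigenvalues, obtained via the complexification of the matrix. -/
noncomputable def specRad {ι : Type*} [Fintype ι] [DecidableEq ι] (A : Matrix ι ι ℝ) : ℝ :=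
  (spectralRadius ℂ (A.map Complex.ofReal)).toReal

section Recursion

variable {R : Type*} [Ring R] {a b w : R} {M : ℕ → R}

theorem eq_pow_mul_mul_pow_add_sum (hM : ∀ k, M (k + 1) = a * M k * b + w) (k : ℕ) :
    M k = a ^ k * M 0 * b ^ k + ∑ j ∈ range k, a ^ j * w * b ^ j := by
  induction k with
  | zero => simp
  | succ k ih =>
    rw [hM, ih, mul_add, add_mul, mul_sum, sum_mul, sum_range_succ', add_assoc]
    simp only [pow_succ' a, pow_succ b, pow_zero, mul_assoc, one_mul, mul_one]

theorem tsum_geometric_smul_sub_eq [TopologicalSpace R] [IsTopologicalRing R] [T2Space R]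
    [Algebra ℝ R] [ContinuousSMul ℝ R] (hM : ∀ k, M (k + 1) = a * M k * b + w)
    {γ : ℝ} (hγ₀ : 0 ≤ γ) (hγ₁ : γ < 1) (hs : Summable fun k => γ ^ k • M k) :
    (∑' k, γ ^ k • M k) - γ • (a * (∑' k, γ ^ k • M k) * b) = M 0 + (γ / (1 - γ)) • w := by
  obtain ⟨S, hS⟩ := hs
  have hgeo : HasSum (fun k : ℕ => γ ^ (k + 1) • w) ((γ / (1 - γ)) • w) := by
    have := ((hasSum_geometric_of_lt_one hγ₀ hγ₁).mul_left γ).smul_const w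
    simpa only [pow_succ', div_eq_mul_inv] using this
  have hshift : HasSum (fun k => γ ^ (k + 1) • M (k + 1))
      (γ • (a * S * b) + (γ / (1 - γ)) • w) :=
    ((((hS.mul_left a).mul_right b).const_smul γ).add hgeo).congr_fun fun k => by
      rw [hM, smul_add, mul_smul_comm, smul_mul_assoc, smul_smul, pow_succ']
  have htail : HasSum (fun k => γ ^ (k + 1) • M (k + 1)) (S - M 0) := by
    simpa using (hasSum_nat_add_iff' 1).2 hS
  rw [hS.tsum_eq]
  calc S - γ • (a * S * b) = (S - M 0) - γ • (a * S * b) + M 0 := by abel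
    _ = M 0 + (γ / (1 - γ)) • w := by rw [htail.unique hshift]; abel

end Recursion

section Summable

variable {R : Type*} [NormedRing R] {a b w : R} {M : ℕ → R} {C ρ : ℝ}

theorem norm_le_of_norm_pow_mul_norm_pow_le (hM : ∀ k, M (k + 1) = a * M k * b + w)
    (hρ : 1 ≤ ρ) (hab : ∀ k, ‖a ^ k‖ * ‖b ^ k‖ ≤ C * ρ ^ k) (k : ℕ) :
    ‖M k‖ ≤ C * (‖M 0‖ + k * ‖w‖) * ρ ^ k := by
  have hC : 0 ≤ C := by simpa using (mul_nonneg (norm_nonneg _) (norm_nonneg _)).trans (hab 0)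
  have hterm (x : R) (j : ℕ) : ‖a ^ j * x * b ^ j‖ ≤ C * ρ ^ j * ‖x‖ :=
    calc ‖a ^ j * x * b ^ j‖ ≤ ‖a ^ j‖ * ‖x‖ * ‖b ^ j‖ := norm_mul₃_le
      _ = ‖a ^ j‖ * ‖b ^ j‖ * ‖x‖ := by ring
      _ ≤ C * ρ ^ j * ‖x‖ := mul_le_mul_of_nonneg_right (hab j) (norm_nonneg x)
  have hsum : ‖∑ j ∈ range k, a ^ j * w * b ^ j‖ ≤ k * (C * ρ ^ k * ‖w‖) :=
    calc ‖∑ j ∈ range k, a ^ j * w * b ^ j‖ ≤ ∑ j ∈ range k, C * ρ ^ j * ‖w‖ :=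
          norm_sum_le_of_le _ fun j _ => hterm w j
      _ ≤ ∑ _j ∈ range k, C * ρ ^ k * ‖w‖ := sum_le_sum fun j hj =>
          mul_le_mul_of_nonneg_right (mul_le_mul_of_nonneg_left
            (pow_le_pow_right₀ hρ (mem_range.1 hj).le) hC) (norm_nonneg w)
      _ = k * (C * ρ ^ k * ‖w‖) := by rw [sum_const, card_range, nsmul_eq_mul]
  calc ‖M k‖ ≤ ‖a ^ k * M 0 * b ^ k‖ + ‖∑ j ∈ range k, a ^ j * w * b ^ j‖ := by
        rw [eq_pow_mul_mul_pow_add_sum hM k]; exact norm_add_le _ _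
    _ ≤ C * ρ ^ k * ‖M 0‖ + k * (C * ρ ^ k * ‖w‖) := add_le_add (hterm _ k) hsum
    _ = C * (‖M 0‖ + k * ‖w‖) * ρ ^ k := by ring

theorem summable_geometric_smul_of_norm_pow_mul_norm_pow_le [NormedAlgebra ℝ R]
    [CompleteSpace R] (hM : ∀ k, M (k + 1) = a * M k * b + w) (hρ : 1 ≤ ρ)
    (hab : ∀ k, ‖a ^ k‖ * ‖b ^ k‖ ≤ C * ρ ^ k) {γ : ℝ} (hγ : 0 ≤ γ) (hγρ : γ * ρ < 1) :
    Summable fun k => γ ^ k • M k := by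
  have hq : ‖γ * ρ‖ < 1 := by rwa [Real.norm_of_nonneg (by positivity)]
  have hmajor : Summable fun k : ℕ => C * ‖M 0‖ * (γ * ρ) ^ k + C * ‖w‖ * (k * (γ * ρ) ^ k) :=
    ((summable_geometric_of_norm_lt_one hq).mul_left _).add
      (((summable_pow_mul_geometric_of_norm_lt_one 1 hq).congr fun k => by simp).mul_left _)
  refine .of_norm_bounded hmajor fun k => ?_
  calc ‖γ ^ k • M k‖ = γ ^ k * ‖M k‖ := by rw [norm_smul, norm_pow, Real.norm_of_nonneg hγ]
    _ ≤ γ ^ k * (C * (‖M 0‖ + k * ‖w‖) * ρ ^ k) :=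
        mul_le_mul_of_nonneg_left (norm_le_of_norm_pow_mul_norm_pow_le hM hρ hab k)
          (by positivity)
    _ = _ := by ring

end Summable

theorem exists_norm_pow_le_mul_pow_of_spectralRadius_lt {A : Type*} [NormedRing A]
    [NormedAlgebra ℂ A] [CompleteSpace A] {a : A} {r : ℝ}
    (hr : (spectralRadius ℂ a).toReal < r) : ∃ C, ∀ k : ℕ, ‖a ^ k‖ ≤ C * r ^ k := by
  have hr₀ : 0 < r := ENNReal.toReal_nonneg.trans_lt hr
  have hfin : spectralRadius ℂ a ≠ ⊤ :=
    ne_top_of_le_ne_top (by simpa using ENNReal.mul_ne_top ENNReal.coe_ne_top ENNReal.coe_ne_top)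
      (spectrum.spectralRadius_le_pow_nnnorm_pow_one_div ℂ a 0)
  have hlt : spectralRadius ℂ a < ENNReal.ofReal r := (ENNReal.lt_ofReal_iff_toReal_lt hfin).2 hr
  have hev : ∀ᶠ k : ℕ in atTop, ‖a ^ k‖ ≤ r ^ k := by
    filter_upwards [(spectrum.pow_norm_pow_one_div_tendsto_nhds_spectralRadius a).eventually_lt_const
      hlt, eventually_ge_atTop 1] with k hk hk1
    rw [ENNReal.ofReal_lt_ofReal_iff hr₀, one_div] at hk
    calc ‖a ^ k‖ = (‖a ^ k‖ ^ (k⁻¹ : ℝ)) ^ k :=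
          (Real.rpow_inv_natCast_pow (norm_nonneg _) (by omega)).symm
      _ ≤ r ^ k := pow_le_pow_left₀ (by positivity) hk.le k
  have hO : (fun k => ‖a ^ k‖) =O[atTop] fun k => r ^ k :=
    IsBigO.of_bound 1 (by simpa [abs_of_pos hr₀] using hev)
  obtain ⟨C, hC⟩ := (isBigO_nat_atTop_iff fun k hk => absurd hk (pow_pos hr₀ k).ne').1 hO
  exact ⟨C, fun k => by simpa [abs_of_pos hr₀] using hC k⟩

section Matrix

/- The Frobenius norm is used because it is invariant both under transposition and under
complexification `A ↦ A.map Complex.ofReal`. -/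
open scoped Matrix.Norms.Frobenius

variable {ι : Type*} [Fintype ι] [DecidableEq ι]

theorem Matrix.exists_norm_pow_le_mul_pow_of_specRad_lt {A : Matrix ι ι ℝ} {r : ℝ}
    (hr : specRad A < r) : ∃ C, ∀ k : ℕ, ‖A ^ k‖ ≤ C * r ^ k := by
  obtain ⟨C, hC⟩ := exists_norm_pow_le_mul_pow_of_spectralRadius_lt hr
  refine ⟨C, fun k => ?_⟩
  have hpow : A.map Complex.ofReal ^ k = (A ^ k).map Complex.ofReal :=
    (map_pow Complex.ofRealHom.mapMatrix A k).symm
  simpa only [hpow, frobenius_norm_map_eq _ _ Complex.norm_real] using hC k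

theorem Matrix.summable_geometric_smul_of_sqrt_mul_specRad_lt_one {A W : Matrix ι ι ℝ}
    {M : ℕ → Matrix ι ι ℝ} (hM : ∀ k, M (k + 1) = A * M k * Aᵀ + W) {γ : ℝ} (hγ₀ : 0 ≤ γ)
    (hγ₁ : γ < 1) (hA : √γ * specRad A < 1) :
    Summable fun k => γ ^ k • M k := by
  have hsqrt : √γ < 1 := Real.sqrt_one ▸ Real.sqrt_lt_sqrt hγ₀ hγ₁
  have hm : √γ * max (specRad A) 1 < 1 :=
    max_rec' (fun x => √γ * x < 1) hA (by simpa using hsqrt)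
  obtain ⟨r, hr, hγr⟩ : ∃ r, max (specRad A) 1 < r ∧ √γ * r < 1 :=
    ⟨_ + (1 - √γ * max (specRad A) 1), by linarith, by nlinarith [Real.sqrt_nonneg γ]⟩
  obtain ⟨C, hC⟩ := Matrix.exists_norm_pow_le_mul_pow_of_specRad_lt (le_max_left _ _ |>.trans_lt hr)
  refine summable_geometric_smul_of_norm_pow_mul_norm_pow_le hM (C := C ^ 2) (ρ := r ^ 2) ?_
    (fun k => ?_) hγ₀ ?_
  · nlinarith [le_max_right (specRad A) 1]
  · rw [← transpose_pow, frobenius_norm_transpose]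
    calc ‖A ^ k‖ * ‖A ^ k‖ ≤ (C * r ^ k) * (C * r ^ k) :=
          mul_le_mul (hC k) (hC k) (norm_nonneg _) ((norm_nonneg _).trans (hC k))
      _ = C ^ 2 * (r ^ 2) ^ k := by ring
  · have hr₀ : 0 ≤ r := by linarith [le_max_right (specRad A) 1]
    calc γ * r ^ 2 = (√γ * r) ^ 2 := by rw [mul_pow, Real.sq_sqrt hγ₀]
      _ < 1 := pow_lt_one₀ (by positivity) hγr two_ne_zero

end Matrix

theorem stmt1_general {n : ℕ} (γ : ℝ) (hγ : γ ∈ Set.Ioo (0 : ℝ) 1)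
    (A₀ S0 Sw : Matrix (Fin n) (Fin n) ℝ)
    (hstab : Real.sqrt γ * specRad A₀ < 1)
    (M : ℕ → Matrix (Fin n) (Fin n) ℝ)
    (hM0 : M 0 = S0) (hMk : ∀ k : ℕ, M (k + 1) = A₀ * M k * A₀ᵀ + Sw) :
    Summable (fun k : ℕ => γ ^ k • M k) ∧
    (∑' k : ℕ, γ ^ k • M k) - γ • (A₀ * (∑' k : ℕ, γ ^ k • M k) * A₀ᵀ)
      = S0 + (γ / (1 - γ)) • Sw := by
  obtain ⟨hγ₀, hγ₁⟩ := hγ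
  have hs := Matrix.summable_geometric_smul_of_sqrt_mul_specRad_lt_one hMk hγ₀.le hγ₁ hstab
  exact ⟨hs, hM0 ▸ tsum_geometric_smul_sub_eq hMk hγ₀.le hγ₁ hs⟩

/-- For `√γ · ρ(A₀) < 1`, `γ ∈ (0,1)`, and the second-moment recursion
`M₀ = Σ₀`, `M_{k+1} = A₀ M_k A₀ᵀ + Σ_w`, the series `Σ = ∑ γᵏ M_k` converges and satisfies
the discounted Lyapunov equation `Σ − γ A₀ Σ A₀ᵀ = Σ₀ + (γ/(1−γ)) Σ_w`. -/
theorem stmt1 {n : ℕ} (hn : 1 ≤ n) (γ : ℝ) (hγ : γ ∈ Set.Ioo (0 : ℝ) 1)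
    (A₀ S0 Sw : Matrix (Fin n) (Fin n) ℝ)
    (hstab : Real.sqrt γ * specRad A₀ < 1)
    (M : ℕ → Matrix (Fin n) (Fin n) ℝ)
    (hM0 : M 0 = S0) (hMk : ∀ k : ℕ, M (k + 1) = A₀ * M k * A₀ᵀ + Sw) :
    Summable (fun k : ℕ => γ ^ k • M k) ∧
    (∑' k : ℕ, γ ^ k • M k) - γ • (A₀ * (∑' k : ℕ, γ ^ k • M k) * A₀ᵀ)
      = S0 + (γ / (1 - γ)) • Sw :=
  stmt1_general γ hγ A₀ S0 Sw hstab M hM0 hMk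
end

section
/- Let n ≥ 1, let A₀ be a real n×n matrix and γ ∈ (0,1) with √γ·ρ(A₀) < 1. Let Σ₀ and Σ_w be real n×n matrices, let M₀ := Σ₀ and M_{k+1} := A₀ M_k A₀ᵀ + Σ_w, let Q' be a symmetric real n×n matrix, and let P be the (unique) solution of the discounted Lyapunov equation P = Q' + γ A₀ᵀ P A₀. Then the series ∑_{k=0}^∞ γᵏ tr(Q' M_k) converges and equals tr(P Σ₀) + (γ/(1−γ)) tr(P Σ_w). In particular, when Σ₀ = s sᵀ for s ∈ ℝⁿ, the sum equals sᵀ P s + (γ/(1−γ)) tr(P Σ_w), i.e., the value function of the discounted LQR value identity V(s) = sᵀ P s + q with q = (γ/(1−γ)) tr(P Σ_w). -/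
open Matrix

/-!
Since `√γ ρ(A₀) < 1`, Gelfand's formula gives `‖A₀ ^ k‖ ≤ C rᵏ` with `γ r² < 1`, so the discounted
moments converge in matrix space to `X = ∑ γᵏ M_k`. Shifting the index of the series shows that `X`
solves the Lyapunov equation `X = Σ₀ + γ/(1-γ) Σ_w + γ A₀ X A₀ᵀ`, the adjoint of the one solved by
`P`, and cyclicity of the trace turns `tr (Q' X)` into `tr (P (X - γ A₀ X A₀ᵀ))`.
-/

open Filter

section Algebra

variable {ι R : Type*} [Fintype ι] [CommRing R]

theorem Matrix.eq_pow_mul_mul_transpose_add_sum [DecidableEq ι] {A S₀ S_w : Matrix ι ι R}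
    {M : ℕ → Matrix ι ι R} (h₀ : M 0 = S₀) (hsucc : ∀ k, M (k + 1) = A * M k * Aᵀ + S_w) (k : ℕ) :
    M k = A ^ k * S₀ * (A ^ k)ᵀ + ∑ j ∈ Finset.range k, A ^ j * S_w * (A ^ j)ᵀ := by
  induction k with
  | zero => simp [h₀]
  | succ k ih =>
    rw [hsucc, ih, Finset.sum_range_succ', pow_succ', transpose_mul]
    simp only [Matrix.mul_add, Matrix.add_mul, Finset.mul_sum, Finset.sum_mul, Matrix.mul_assoc,
      pow_succ', transpose_mul, pow_zero, one_mul, transpose_one, mul_one]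
    abel

theorem Matrix.trace_mul_eq_of_lyapunov {A P Q X S : Matrix ι ι R} {γ : R}
    (hP : P = Q + γ • (Aᵀ * P * A)) (hX : X = S + γ • (A * X * Aᵀ)) :
    (Q * X).trace = (P * S).trace := by
  have hQ : Q = P - γ • (Aᵀ * P * A) := eq_sub_of_add_eq hP.symm
  have hS : S = X - γ • (A * X * Aᵀ) := eq_sub_of_add_eq hX.symm
  have hcyc : (Aᵀ * P * A * X).trace = (P * (A * X * Aᵀ)).trace := by
    rw [Matrix.mul_assoc, Matrix.mul_assoc, trace_mul_comm, ← Matrix.mul_assoc, ← Matrix.mul_assoc,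
      ← Matrix.mul_assoc]
  rw [hQ, hS, Matrix.sub_mul, Matrix.mul_sub, trace_sub, trace_sub, Matrix.smul_mul,
    Matrix.mul_smul, trace_smul, trace_smul, hcyc]

end Algebra

theorem spectrum.exists_norm_pow_le_of_spectralRadius_lt {A : Type*} [NormedRing A]
    [NormedAlgebra ℂ A] [CompleteSpace A] (a : A) {r : ℝ}
    (h : spectralRadius ℂ a < ENNReal.ofReal r) : ∃ C, ∀ k : ℕ, ‖a ^ k‖ ≤ C * r ^ k := by
  have hr : 0 < r := ENNReal.ofReal_pos.mp (lt_of_le_of_lt bot_le h)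
  have hlt : ∀ᶠ k : ℕ in atTop, ‖a ^ k‖ ≤ r ^ k := by
    filter_upwards [(pow_norm_pow_one_div_tendsto_nhds_spectralRadius a).eventually_lt_const h,
      eventually_gt_atTop 0] with k hk hk0
    have hk' := (ENNReal.ofReal_lt_ofReal_iff hr).mp hk
    rw [one_div, Real.rpow_inv_lt_iff_of_pos (norm_nonneg _) hr.le (by positivity),
      Real.rpow_natCast] at hk'
    exact hk'.le
  have hO : (fun k => ‖a ^ k‖) =O[atTop] (fun k => r ^ k) :=
    Asymptotics.IsBigO.of_bound 1 (hlt.mono fun k hk => by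
      rw [one_mul, Real.norm_of_nonneg (norm_nonneg _), Real.norm_of_nonneg (by positivity)]
      exact hk)
  obtain ⟨C, hC⟩ := (Asymptotics.isBigO_nat_atTop_iff fun k hk => absurd hk (by positivity)).mp hO
  refine ⟨C, fun k => ?_⟩
  simpa [Real.norm_of_nonneg (by positivity : 0 ≤ r ^ k)] using hC k

theorem exists_one_le_lt_of_sqrt_mul_lt_one {γ ρ : ℝ} (hγ : γ ∈ Set.Ioo (0 : ℝ) 1)
    (h : √γ * ρ < 1) : ∃ r, 1 ≤ r ∧ ρ < r ∧ γ * r ^ 2 < 1 := by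
  have hs : 0 < √γ := Real.sqrt_pos.mpr hγ.1
  have hρ : ρ < (√γ)⁻¹ := by simpa only [mul_one] using (lt_inv_mul_iff₀ hs).mpr h
  have h1 : 1 < (√γ)⁻¹ :=
    (one_lt_inv₀ hs).mpr ((Real.sqrt_lt' one_pos).mpr (by rw [one_pow]; exact hγ.2))
  obtain ⟨r, hr, hr'⟩ := exists_between (max_lt hρ h1)
  have hr1 : 1 ≤ r := (le_max_right _ _).trans hr.le
  have hsr : √γ * r < 1 :=
    (mul_lt_mul_of_pos_left hr' hs).trans_eq (mul_inv_cancel₀ hs.ne')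
  refine ⟨r, hr1, (le_max_left _ _).trans_lt hr, ?_⟩
  rw [← Real.sq_sqrt hγ.1.le, ← mul_pow]
  exact pow_lt_one₀ (mul_nonneg hs.le (zero_le_one.trans hr1)) hsr two_ne_zero

theorem Matrix.eq_add_smul_of_hasSum_pow_smul {ι : Type*} [Fintype ι] {γ : ℝ} (hγ0 : 0 ≤ γ)
    (hγ1 : γ < 1) {A S₀ S_w X : Matrix ι ι ℝ} {M : ℕ → Matrix ι ι ℝ} (h₀ : M 0 = S₀)
    (hsucc : ∀ k, M (k + 1) = A * M k * Aᵀ + S_w) (hX : HasSum (fun k => γ ^ k • M k) X) :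
    X = (S₀ + (γ / (1 - γ)) • S_w) + γ • (A * X * Aᵀ) := by
  have htail : HasSum (fun k => γ ^ (k + 1) • M (k + 1)) (X - S₀) := by
    simpa [h₀] using (hasSum_nat_add_iff' 1).mpr hX
  have hgeo : HasSum (fun k => γ ^ (k + 1)) (γ / (1 - γ)) := by
    simpa [pow_succ', div_eq_mul_inv] using (hasSum_geometric_of_lt_one hγ0 hγ1).mul_left γ
  have hrec : HasSum (fun k => γ ^ (k + 1) • M (k + 1))
      (γ • (A * X * Aᵀ) + (γ / (1 - γ)) • S_w) := by
    refine ((((hX.mul_left A).mul_right Aᵀ).const_smul γ).add (hgeo.smul_const S_w)).congr_fun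
      fun k => ?_
    rw [hsucc, smul_add, pow_succ', mul_smul, Matrix.mul_smul, Matrix.smul_mul]
  rw [← sub_eq_zero, ← sub_eq_zero.mpr (htail.unique hrec)]
  abel

section Frobenius

attribute [local instance] Matrix.frobeniusNormedAddCommGroup Matrix.frobeniusNormedRing
  Matrix.frobeniusNormedAlgebra

variable {ι : Type*} [Fintype ι] [DecidableEq ι]

theorem Matrix.exists_norm_pow_le_of_specRad_lt (A : Matrix ι ι ℝ) {r : ℝ} (h : specRad A < r) :
    ∃ C, ∀ k : ℕ, ‖A ^ k‖ ≤ C * r ^ k := by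
  set B := A.map Complex.ofReal
  have hfin : spectralRadius ℂ B ≠ ⊤ := by
    refine ne_top_of_le_ne_top ?_ (spectrum.spectralRadius_le_pow_nnnorm_pow_one_div ℂ B 0)
    exact ENNReal.mul_ne_top (by simp) (by simp)
  obtain ⟨C, hC⟩ := spectrum.exists_norm_pow_le_of_spectralRadius_lt B
    ((ENNReal.lt_ofReal_iff_toReal_lt hfin).mpr h)
  refine ⟨C, fun k => ?_⟩
  have hBk : B ^ k = (A ^ k).map Complex.ofReal := (map_pow Complex.ofRealHom.mapMatrix A k).symm
  simpa only [hBk, frobenius_norm_map_eq _ _ Complex.norm_real] using hC k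

theorem Matrix.norm_mul_mul_transpose_le (B W : Matrix ι ι ℝ) : ‖B * W * Bᵀ‖ ≤ ‖B‖ ^ 2 * ‖W‖ :=
  calc ‖B * W * Bᵀ‖ ≤ ‖B‖ * ‖W‖ * ‖Bᵀ‖ :=
        (norm_mul_le _ _).trans (mul_le_mul_of_nonneg_right (norm_mul_le _ _) (norm_nonneg _))
    _ = ‖B‖ ^ 2 * ‖W‖ := by rw [frobenius_norm_transpose]; ring

theorem Matrix.norm_pow_mul_mul_transpose_le {A : Matrix ι ι ℝ} {C r : ℝ} (hr : 1 ≤ r)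
    (hC : ∀ k : ℕ, ‖A ^ k‖ ≤ C * r ^ k) (W : Matrix ι ι ℝ) {j k : ℕ} (hjk : j ≤ k) :
    ‖A ^ j * W * (A ^ j)ᵀ‖ ≤ C ^ 2 * ‖W‖ * (r ^ 2) ^ k :=
  calc ‖A ^ j * W * (A ^ j)ᵀ‖ ≤ ‖A ^ j‖ ^ 2 * ‖W‖ := norm_mul_mul_transpose_le _ _
    _ ≤ (C * r ^ j) ^ 2 * ‖W‖ := by gcongr; exact hC j
    _ = C ^ 2 * ‖W‖ * (r ^ 2) ^ j := by ring
    _ ≤ C ^ 2 * ‖W‖ * (r ^ 2) ^ k := by gcongr; nlinarith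

variable {A S₀ S_w : Matrix ι ι ℝ} {M : ℕ → Matrix ι ι ℝ}

theorem Matrix.norm_le_of_norm_pow_le (h₀ : M 0 = S₀)
    (hsucc : ∀ k, M (k + 1) = A * M k * Aᵀ + S_w) {C r : ℝ} (hr : 1 ≤ r)
    (hC : ∀ k : ℕ, ‖A ^ k‖ ≤ C * r ^ k) (k : ℕ) :
    ‖M k‖ ≤ C ^ 2 * (‖S₀‖ + k * ‖S_w‖) * (r ^ 2) ^ k := by
  rw [eq_pow_mul_mul_transpose_add_sum h₀ hsucc k]
  calc _ ≤ ‖A ^ k * S₀ * (A ^ k)ᵀ‖ + ∑ j ∈ Finset.range k, ‖A ^ j * S_w * (A ^ j)ᵀ‖ :=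
        norm_add_le_of_le le_rfl (norm_sum_le _ _)
    _ ≤ C ^ 2 * ‖S₀‖ * (r ^ 2) ^ k + ∑ j ∈ Finset.range k, C ^ 2 * ‖S_w‖ * (r ^ 2) ^ k := by
        gcongr with j hj
        · exact norm_pow_mul_mul_transpose_le hr hC S₀ le_rfl
        · exact norm_pow_mul_mul_transpose_le hr hC S_w (Finset.mem_range.mp hj).le
    _ = C ^ 2 * (‖S₀‖ + k * ‖S_w‖) * (r ^ 2) ^ k := by
        rw [Finset.sum_const, Finset.card_range, nsmul_eq_mul]; ring

theorem Matrix.summable_pow_smul_of_norm_pow_le (h₀ : M 0 = S₀)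
    (hsucc : ∀ k, M (k + 1) = A * M k * Aᵀ + S_w) {γ C r : ℝ} (hγ : 0 ≤ γ) (hr : 1 ≤ r)
    (hγr : γ * r ^ 2 < 1) (hC : ∀ k : ℕ, ‖A ^ k‖ ≤ C * r ^ k) :
    Summable fun k => γ ^ k • M k := by
  have hx : ‖γ * r ^ 2‖ < 1 := by rwa [Real.norm_of_nonneg (by positivity)]
  have hdom : Summable fun k : ℕ => C ^ 2 * (‖S₀‖ + k * ‖S_w‖) * (γ * r ^ 2) ^ k := by
    refine (((summable_geometric_of_norm_lt_one hx).mul_left (C ^ 2 * ‖S₀‖)).add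
      ((summable_pow_mul_geometric_of_norm_lt_one 1 hx).mul_left (C ^ 2 * ‖S_w‖))).congr
      fun k => by ring
  refine Summable.of_norm_bounded hdom fun k => ?_
  rw [norm_smul, Real.norm_of_nonneg (by positivity), mul_pow]
  calc γ ^ k * ‖M k‖ ≤ γ ^ k * (C ^ 2 * (‖S₀‖ + k * ‖S_w‖) * (r ^ 2) ^ k) := by
        gcongr; exact norm_le_of_norm_pow_le h₀ hsucc hr hC k
    _ = C ^ 2 * (‖S₀‖ + k * ‖S_w‖) * (γ ^ k * (r ^ 2) ^ k) := by ring

theorem Matrix.summable_pow_smul_of_sqrt_mul_specRad_lt_one (h₀ : M 0 = S₀)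
    (hsucc : ∀ k, M (k + 1) = A * M k * Aᵀ + S_w) {γ : ℝ} (hγ : γ ∈ Set.Ioo (0 : ℝ) 1)
    (hstab : √γ * specRad A < 1) : Summable fun k => γ ^ k • M k := by
  obtain ⟨r, hr, hρr, hγr⟩ := exists_one_le_lt_of_sqrt_mul_lt_one hγ hstab
  obtain ⟨C, hC⟩ := A.exists_norm_pow_le_of_specRad_lt hρr
  exact summable_pow_smul_of_norm_pow_le h₀ hsucc hγ.1.le hr hγr hC

end Frobenius

theorem stmt3_general {n : ℕ} (γ : ℝ) (hγ : γ ∈ Set.Ioo (0 : ℝ) 1)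
    (A₀ S0 Sw : Matrix (Fin n) (Fin n) ℝ)
    (hstab : Real.sqrt γ * specRad A₀ < 1)
    (M : ℕ → Matrix (Fin n) (Fin n) ℝ)
    (hM0 : M 0 = S0) (hMk : ∀ k : ℕ, M (k + 1) = A₀ * M k * A₀ᵀ + Sw)
    (Q' : Matrix (Fin n) (Fin n) ℝ)
    (P : Matrix (Fin n) (Fin n) ℝ) (hP : P = Q' + γ • (A₀ᵀ * P * A₀)) :
    Summable (fun k : ℕ => γ ^ k * (Q' * M k).trace) ∧
    (∑' k : ℕ, γ ^ k * (Q' * M k).trace)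
      = (P * S0).trace + (γ / (1 - γ)) * (P * Sw).trace ∧
    ∀ s : Fin n → ℝ, S0 = Matrix.vecMulVec s s →
      (∑' k : ℕ, γ ^ k * (Q' * M k).trace)
        = s ⬝ᵥ P.mulVec s + (γ / (1 - γ)) * (P * Sw).trace := by
  obtain ⟨X, hX⟩ := summable_pow_smul_of_sqrt_mul_specRad_lt_one hM0 hMk hγ hstab
  have hXeq := eq_add_smul_of_hasSum_pow_smul hγ.1.le hγ.2 hM0 hMk hX
  have hsum : HasSum (fun k : ℕ => γ ^ k * (Q' * M k).trace)
      ((P * S0).trace + (γ / (1 - γ)) * (P * Sw).trace) := by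
    have h : HasSum (fun k : ℕ => γ ^ k * (Q' * M k).trace) (Q' * X).trace := by
      simpa [Function.comp_def, Matrix.mul_smul] using
        (hX.mul_left Q').map (traceAddMonoidHom (Fin n) ℝ) continuous_id.matrix_trace
    rwa [trace_mul_eq_of_lyapunov hP hXeq, Matrix.mul_add, trace_add, Matrix.mul_smul, trace_smul,
      smul_eq_mul] at h
  refine ⟨hsum.summable, hsum.tsum_eq, fun s hs => ?_⟩
  rw [hsum.tsum_eq, hs, mul_vecMulVec, trace_vecMulVec, dotProduct_comm]

/-- With `√γ·ρ(A₀) < 1`, second moments `M₀ = Σ₀`,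
`M_{k+1} = A₀ M_k A₀ᵀ + Σ_w`, a symmetric `Q'`, and `P` the solution of the discounted
Lyapunov equation `P = Q' + γ A₀ᵀ P A₀`, the series `∑ γᵏ tr(Q' M_k)` converges and equals
`tr(P Σ₀) + (γ/(1−γ)) tr(P Σ_w)`; in particular for `Σ₀ = s sᵀ` it equals
`sᵀ P s + (γ/(1−γ)) tr(P Σ_w)`. -/
theorem stmt3 {n : ℕ} (hn : 1 ≤ n) (γ : ℝ) (hγ : γ ∈ Set.Ioo (0 : ℝ) 1)
    (A₀ S0 Sw : Matrix (Fin n) (Fin n) ℝ)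
    (hstab : Real.sqrt γ * specRad A₀ < 1)
    (M : ℕ → Matrix (Fin n) (Fin n) ℝ)
    (hM0 : M 0 = S0) (hMk : ∀ k : ℕ, M (k + 1) = A₀ * M k * A₀ᵀ + Sw)
    (Q' : Matrix (Fin n) (Fin n) ℝ) (hQ : Q'.IsSymm)
    (P : Matrix (Fin n) (Fin n) ℝ) (hP : P = Q' + γ • (A₀ᵀ * P * A₀)) :
    Summable (fun k : ℕ => γ ^ k * (Q' * M k).trace) ∧
    (∑' k : ℕ, γ ^ k * (Q' * M k).trace)
      = (P * S0).trace + (γ / (1 - γ)) * (P * Sw).trace ∧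
    ∀ s : Fin n → ℝ, S0 = Matrix.vecMulVec s s →
      (∑' k : ℕ, γ ^ k * (Q' * M k).trace)
        = s ⬝ᵥ P.mulVec s + (γ / (1 - γ)) * (P * Sw).trace :=
  stmt3_general γ hγ A₀ S0 Sw hstab M hM0 hMk Q' P hP
end

section
/- Fix n, m ≥ 1, real matrices A (n×n), B (n×m), a symmetric n×n matrix Q, a symmetric m×m matrix R, and γ ∈ (0,1). For K an m×n real matrix define A_K := A − BK, and define P(K) := ∑'_{k} γᵏ (A_Kᵀ)ᵏ (Q + KᵀRK) (A_K)ᵏ (the tsum over k ≥ 0). Let K₀ satisfy √γ·ρ(A_{K₀}) < 1. Then the map K ↦ P(K) is Fréchet differentiable at K₀, and for every direction H (m×n real matrix), the derivative D := DP(K₀)[H] is the unique n×n real matrix satisfying the differential Lyapunov equation D − γ A_{K₀}ᵀ D A_{K₀} = HᵀS + SᵀH, where S := R K₀ − γ Bᵀ P(K₀) A_{K₀}. -/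
open Matrix

attribute [local instance] Matrix.normedAddCommGroup Matrix.normedSpace

/-- The discounted-LQR value matrix `P(K) = ∑ γᵏ ((A−BK)ᵀ)ᵏ (Q + KᵀRK) (A−BK)ᵏ`. -/
noncomputable def Pval {n m : ℕ} (A : Matrix (Fin n) (Fin n) ℝ)
    (B : Matrix (Fin n) (Fin m) ℝ) (Q : Matrix (Fin n) (Fin n) ℝ)
    (R : Matrix (Fin m) (Fin m) ℝ) (γ : ℝ) (K : Matrix (Fin m) (Fin n) ℝ) :
    Matrix (Fin n) (Fin n) ℝ :=
  ∑' k : ℕ, γ ^ k • (((A - B * K)ᵀ) ^ k * (Q + Kᵀ * R * K) * (A - B * K) ^ k)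

/-!
Write `T_K X = γ (A - BK)ᵀ X (A - BK)` and `M_K = Q + KᵀRK`, so that `P(K) = ∑ₖ T_Kᵏ M_K`.
Gelfand's formula gives `‖(A - BK₀)ᵏ‖ ≤ tᵏ` eventually, for some `t` with `√γ t < 1`, hence
`T_{K₀}ᵏ → 0`. Then some power of `T_K` has norm `< 1` for every `K` near `K₀`, so the series
converges there and `P(K) = (1 - T_K)⁻¹ M_K` in the Banach algebra of operators on matrices.
As `K ↦ T_K` and `K ↦ M_K` are polynomial and inversion is smooth on units, `P` is
differentiable at `K₀`; differentiating `P(K) - T_K P(K) = M_K` yields the Lyapunov equation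
for `DP(K₀)[H]`, whose solution is unique because `1 - T_{K₀}` is invertible.
-/

open Filter Topology

section GeometricSeries

variable {R : Type*} [NormedRing R]

theorem norm_pow_mul_add_le (a : R) (N j r : ℕ) :
    ‖a ^ (j * N + r)‖ ≤ ‖a ^ N‖ ^ j * ‖a ^ r‖ := by
  induction j with
  | zero => simp
  | succ j ih =>
    calc ‖a ^ ((j + 1) * N + r)‖ = ‖a ^ N * a ^ (j * N + r)‖ := by
          rw [← pow_add]; ring_nf
      _ ≤ ‖a ^ N‖ * (‖a ^ N‖ ^ j * ‖a ^ r‖) :=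
          (norm_mul_le _ _).trans (by gcongr)
      _ = ‖a ^ N‖ ^ (j + 1) * ‖a ^ r‖ := by ring

theorem Summable.isUnit_one_sub {a : R} (h : Summable (a ^ ·)) : IsUnit (1 - a) :=
  ⟨⟨1 - a, ∑' k, a ^ k, h.one_sub_mul_tsum_pow, h.tsum_pow_mul_one_sub⟩, rfl⟩

theorem Summable.ringInverse_one_sub {a : R} (h : Summable (a ^ ·)) :
    Ring.inverse (1 - a) = ∑' k, a ^ k :=
  Ring.inverse_unit ⟨1 - a, ∑' k, a ^ k, h.one_sub_mul_tsum_pow, h.tsum_pow_mul_one_sub⟩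

variable [CompleteSpace R]

theorem summable_pow_of_norm_pow_lt_one {a : R} {N : ℕ} (hN : N ≠ 0) (h : ‖a ^ N‖ < 1) :
    Summable (a ^ ·) := by
  have : NeZero N := ⟨hN⟩
  refine Summable.of_norm ?_
  rw [← (Nat.divModEquiv N).symm.summable_iff]
  have hgeom : Summable fun j : ℕ => ‖a ^ N‖ ^ j :=
    summable_geometric_of_lt_one (norm_nonneg _) h
  have hfin : Summable fun r : Fin N => ‖a ^ (r : ℕ)‖ := Summable.of_finite
  have hmajor : Summable fun p : ℕ × Fin N => ‖a ^ N‖ ^ p.1 * ‖a ^ (p.2 : ℕ)‖ :=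
    hgeom.mul_of_nonneg hfin (fun _ => by positivity) (fun _ => norm_nonneg _)
  exact hmajor.of_nonneg_of_le (fun _ => norm_nonneg _)
    (fun p => norm_pow_mul_add_le a N p.1 p.2)

theorem eventually_summable_pow_of_tendsto {a : R} (ha : Tendsto (a ^ ·) atTop (𝓝 0)) :
    ∀ᶠ b in 𝓝 a, Summable (b ^ ·) := by
  obtain ⟨N, hN, hlt⟩ : ∃ N, N ≠ 0 ∧ ‖a ^ N‖ < 1 :=
    ((eventually_ne_atTop 0).and (ha.norm.eventually (gt_mem_nhds (by simp)))).exists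
  have hcont : Tendsto (fun b : R => ‖b ^ N‖) (𝓝 a) (𝓝 ‖a ^ N‖) :=
    ((continuous_pow N).tendsto a).norm
  filter_upwards [hcont.eventually (gt_mem_nhds hlt)] with b hb
  exact summable_pow_of_norm_pow_lt_one hN hb

end GeometricSeries

section LyapunovSeries

variable {𝕜 E F : Type*} [NontriviallyNormedField 𝕜] [NormedAddCommGroup E] [NormedSpace 𝕜 E]
  [NormedAddCommGroup F] [NormedSpace 𝕜 F]

theorem Summable.tsum_pow_apply {a : F →L[𝕜] F} (h : Summable (a ^ ·)) (y : F) :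
    ∑' k, (a ^ k) y = Ring.inverse (1 - a) y := by
  rw [h.ringInverse_one_sub, ← ContinuousLinearMap.apply_apply (v := y),
    ContinuousLinearMap.map_tsum _ h]
  rfl

theorem Summable.eq_of_sub_apply_eq {a : F →L[𝕜] F} (h : Summable (a ^ ·)) {x y : F}
    (hxy : x - a x = y - a y) : x = y := by
  have hinv := Ring.inverse_mul_cancel _ h.isUnit_one_sub
  calc x = (Ring.inverse (1 - a) * (1 - a)) x := by rw [hinv]; rfl
    _ = Ring.inverse (1 - a) (x - a x) := rfl
    _ = (Ring.inverse (1 - a) * (1 - a)) y := by rw [hxy]; rfl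
    _ = y := by rw [hinv]; rfl

theorem ContinuousLinearMap.tendsto_apply₂_nhds_zero {G H : Type*} [NormedAddCommGroup G]
    [NormedSpace 𝕜 G] [NormedAddCommGroup H] [NormedSpace 𝕜 H] {ι : Type*} {l : Filter ι}
    (B : E →L[𝕜] G →L[𝕜] H) {u : ι → E} {v : ι → G} (hu : Tendsto u l (𝓝 0))
    (hv : Tendsto v l (𝓝 0)) : Tendsto (fun i => B (u i) (v i)) l (𝓝 0) := by
  simpa [Function.comp_def] using (B.continuous₂.tendsto (0, 0)).comp (hu.prodMk_nhds hv)

variable [CompleteSpace F]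
  {T : E → F →L[𝕜] F} {T' : E →L[𝕜] F →L[𝕜] F} {M : E → F} {M' : E →L[𝕜] F} {x₀ : E}

theorem hasFDerivAt_tsum_pow_apply (hT : HasFDerivAt T T' x₀) (hM : HasFDerivAt M M' x₀)
    (hstab : Tendsto (T x₀ ^ ·) atTop (𝓝 0)) :
    ∃ D : E →L[𝕜] F, HasFDerivAt (fun x => ∑' k, (T x ^ k) (M x)) D x₀ ∧
      ∀ h, D h - T x₀ (D h) = M' h + T' h (∑' k, (T x₀ ^ k) (M x₀)) := by
  set P := fun x => ∑' k, (T x ^ k) (M x)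
  have hsum : ∀ᶠ x in 𝓝 x₀, Summable (T x ^ ·) :=
    hT.continuousAt.eventually (eventually_summable_pow_of_tendsto hstab)
  have hP : P =ᶠ[𝓝 x₀] fun x => Ring.inverse (1 - T x) (M x) := by
    filter_upwards [hsum] with x hx using hx.tsum_pow_apply (M x)
  have hdiff : DifferentiableAt 𝕜 (fun x => Ring.inverse (1 - T x) (M x)) x₀ :=
    ((differentiableAt_inverse hsum.self_of_nhds.isUnit_one_sub).comp x₀
      (hT.differentiableAt.const_sub 1)).clm_apply hM.differentiableAt
  have hD : HasFDerivAt P (fderiv 𝕜 P x₀) x₀ := (hdiff.congr_of_eventuallyEq hP).hasFDerivAt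
  have hfix : (fun x => P x - T x (P x)) =ᶠ[𝓝 x₀] M := by
    filter_upwards [hP, hsum] with x hPx hx
    have := congrArg (· (M x)) (Ring.mul_inverse_cancel _ hx.isUnit_one_sub)
    simpa [hPx] using this
  have hM' := ((hD.sub (hT.clm_apply hD)).congr_of_eventuallyEq hfix.symm).unique hM
  refine ⟨fderiv 𝕜 P x₀, hD, fun h => ?_⟩
  have := congrArg (· h) hM'
  simp only [_root_.sub_apply, _root_.add_apply, ContinuousLinearMap.comp_apply,
    ContinuousLinearMap.flip_apply] at this
  rw [← this]
  abel

end LyapunovSeries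

section Gelfand

-- Gelfand's formula needs a submultiplicative norm; the ℓ∞ operator norm is one.
attribute [local instance] Matrix.linftyOpNormedAddCommGroup Matrix.linftyOpNormedRing
  Matrix.linftyOpNormedAlgebra

variable {ι : Type*} [Fintype ι] [DecidableEq ι]

theorem Matrix.norm_apply_le_linfty_opNorm (A : Matrix ι ι ℂ) (i j : ι) : ‖A i j‖ ≤ ‖A‖ := by
  rw [← coe_nnnorm, ← coe_nnnorm, NNReal.coe_le_coe, Matrix.linfty_opNNNorm_def]
  exact (Finset.single_le_sum (fun j _ => zero_le) (Finset.mem_univ j)).trans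
    (Finset.le_sup (f := fun i => ∑ j, ‖A i j‖₊) (Finset.mem_univ i))

theorem Matrix.eventually_norm_pow_apply_le [Nonempty ι] (A : Matrix ι ι ℂ) {t : ℝ}
    (ht : (spectralRadius ℂ A).toReal < t) : ∀ᶠ k in atTop, ∀ i j, ‖(A ^ k) i j‖ ≤ t ^ k := by
  have ht0 : 0 < t := ENNReal.toReal_nonneg.trans_lt ht
  have hlt : spectralRadius ℂ A < ENNReal.ofReal t := by
    rwa [ENNReal.lt_ofReal_iff_toReal_lt
      (ne_top_of_le_ne_top ENNReal.coe_ne_top (spectrum.spectralRadius_le_nnnorm A))]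
  filter_upwards [(spectrum.pow_norm_pow_one_div_tendsto_nhds_spectralRadius A).eventually_lt_const
    hlt, eventually_gt_atTop 0] with k hk hk0 i j
  rw [ENNReal.ofReal_lt_ofReal_iff ht0, one_div,
    Real.rpow_inv_lt_iff_of_pos (norm_nonneg _) ht0.le (by positivity), Real.rpow_natCast] at hk
  exact (A ^ k).norm_apply_le_linfty_opNorm i j |>.trans hk.le

end Gelfand

theorem Matrix.eventually_norm_pow_le_of_specRad_lt {ι : Type*} [Fintype ι] [DecidableEq ι]
    (A : Matrix ι ι ℝ) {t : ℝ} (ht : specRad A < t) : ∀ᶠ k in atTop, ‖A ^ k‖ ≤ t ^ k := by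
  have ht0 : 0 < t := ENNReal.toReal_nonneg.trans_lt ht
  rcases isEmpty_or_nonempty ι with hι | hι
  · exact .of_forall fun k => (Matrix.norm_le_iff (by positivity)).2 fun i => isEmptyElim i
  filter_upwards [(A.map Complex.ofReal).eventually_norm_pow_apply_le ht] with k hk
  refine (Matrix.norm_le_iff (by positivity)).2 fun i j => ?_
  have hmap : (A.map Complex.ofReal) ^ k = (A ^ k).map Complex.ofReal :=
    (Matrix.map_pow A Complex.ofRealHom k).symm
  simpa [hmap] using hk i j

theorem isSymm_Pval {n m : ℕ} (A : Matrix (Fin n) (Fin n) ℝ) (B : Matrix (Fin n) (Fin m) ℝ)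
    (Q : Matrix (Fin n) (Fin n) ℝ) (R : Matrix (Fin m) (Fin m) ℝ) (γ : ℝ) (hQ : Q.IsSymm)
    (hR : R.IsSymm) (K : Matrix (Fin m) (Fin n) ℝ) : (Pval A B Q R γ K).IsSymm := by
  rw [Matrix.IsSymm, Pval, Matrix.transpose_tsum]
  refine tsum_congr fun k => ?_
  simp [Matrix.transpose_pow, hQ.eq, hR.eq, Matrix.mul_assoc]

section MatrixOperators

-- The product topology and uniformity of matrices are those of the sup norm only up to unfolding,
-- which blocks instance search for the norms on spaces of operators between matrices.
attribute [-instance] instTopologicalSpaceMatrix Matrix.instUniformSpace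

variable {l l' m m' : Type*} [Fintype l] [Fintype l'] [Fintype m] [Fintype m']

noncomputable def Matrix.sandwich :
    Matrix l m ℝ →L[ℝ] Matrix l' m' ℝ →L[ℝ] (Matrix l l' ℝ →L[ℝ] Matrix m m' ℝ) :=
  LinearMap.toContinuousBilinearMap <| LinearMap.mk₂ ℝ
    (fun U V => LinearMap.toContinuousLinearMap
      ((mulLeftLinearMap m' ℝ Uᵀ).comp (mulRightLinearMap l ℝ V)))
    (fun _ _ _ => by ext; simp [Matrix.add_mul])
    (fun _ _ _ => by ext; simp)
    (fun _ _ _ => by ext; simp [Matrix.mul_add])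
    (fun _ _ _ => by ext; simp)

@[simp]
theorem Matrix.sandwich_apply (U : Matrix l m ℝ) (V : Matrix l' m' ℝ) (X : Matrix l l' ℝ) :
    sandwich U V X = Uᵀ * X * V := by
  simp [sandwich, Matrix.mul_assoc]

variable {ι : Type*} [Fintype ι]

theorem Matrix.sandwich_mul_sandwich (U U' V V' : Matrix ι ι ℝ) :
    sandwich U U' * sandwich V V' = sandwich (V * U) (V' * U') := by
  ext1 X
  simp [Matrix.mul_assoc]

variable [DecidableEq ι]

theorem Matrix.sandwich_pow (U V : Matrix ι ι ℝ) (k : ℕ) :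
    sandwich U V ^ k = sandwich (U ^ k) (V ^ k) := by
  induction k with
  | zero => ext1 X; simp
  | succ k ih => rw [pow_succ, ih, sandwich_mul_sandwich, ← pow_succ', ← pow_succ']

theorem Matrix.smul_sandwich_pow_apply (c : ℝ) (L X : Matrix ι ι ℝ) (k : ℕ) :
    ((c • sandwich L L) ^ k) X = c ^ k • ((Lᵀ) ^ k * X * L ^ k) := by
  rw [smul_pow, sandwich_pow]
  simp [Matrix.transpose_pow]

theorem Matrix.tendsto_smul_sandwich_pow_nhds_zero {γ : ℝ} (hγ : 0 ≤ γ) {L : Matrix ι ι ℝ}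
    (hL : √γ * specRad L < 1) : Tendsto (fun k => (γ • sandwich L L) ^ k) atTop (𝓝 0) := by
  obtain ⟨t, hLt, ht⟩ : ∃ t, specRad L < t ∧ √γ * t < 1 :=
    ((continuous_const.mul continuous_id).continuousAt.eventually_lt continuousAt_const
      hL).exists_gt
  have hpow : Tendsto (fun k => (√γ • L) ^ k) atTop (𝓝 0) := by
    refine squeeze_zero_norm' ?_ (tendsto_pow_atTop_nhds_zero_of_lt_one
      (mul_nonneg (Real.sqrt_nonneg γ) (ENNReal.toReal_nonneg.trans hLt.le)) ht)
    filter_upwards [L.eventually_norm_pow_le_of_specRad_lt hLt] with k hk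
    rw [smul_pow, norm_smul, Real.norm_of_nonneg (by positivity), mul_pow]
    gcongr
  have hsmul : sandwich (√γ • L) (√γ • L) = γ • sandwich L L := by
    simp [smul_smul, Real.mul_self_sqrt hγ]
  have hk (k : ℕ) : sandwich ((√γ • L) ^ k) ((√γ • L) ^ k) = (γ • sandwich L L) ^ k := by
    rw [← hsmul, sandwich_pow]
  exact (sandwich.tendsto_apply₂_nhds_zero hpow hpow).congr hk

variable {n m : ℕ} (A : Matrix (Fin n) (Fin n) ℝ) (B : Matrix (Fin n) (Fin m) ℝ)
  (Q : Matrix (Fin n) (Fin n) ℝ) (R : Matrix (Fin m) (Fin m) ℝ) {γ : ℝ}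

theorem Pval_eq_tsum_sandwich_pow_apply (K : Matrix (Fin m) (Fin n) ℝ) :
    Pval A B Q R γ K = ∑' k, ((γ • sandwich (A - B * K) (A - B * K)) ^ k) (Q + Kᵀ * R * K) :=
  tsum_congr fun k => (Matrix.smul_sandwich_pow_apply _ _ _ k).symm

theorem exists_hasFDerivAt_Pval (hQ : Q.IsSymm) (hR : R.IsSymm) (hγ : 0 ≤ γ)
    (K₀ : Matrix (Fin m) (Fin n) ℝ) (hstab : √γ * specRad (A - B * K₀) < 1) :
    ∃ D : Matrix (Fin m) (Fin n) ℝ →L[ℝ] Matrix (Fin n) (Fin n) ℝ,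
      HasFDerivAt (Pval A B Q R γ) D K₀ ∧ ∀ H,
        D H - γ • ((A - B * K₀)ᵀ * D H * (A - B * K₀))
          = Hᵀ * (R * K₀ - γ • (Bᵀ * Pval A B Q R γ K₀ * (A - B * K₀)))
            + (R * K₀ - γ • (Bᵀ * Pval A B Q R γ K₀ * (A - B * K₀)))ᵀ * H := by
  have hL : HasFDerivAt (fun K : Matrix (Fin m) (Fin n) ℝ => A - B * K)
      (-(mulLeftLinearMap (Fin n) ℝ B).toContinuousLinearMap) K₀ :=
    (mulLeftLinearMap (Fin n) ℝ B).toContinuousLinearMap.hasFDerivAt.const_sub A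
  have hT := (sandwich.hasFDerivAt_of_bilinear hL hL).const_smul γ
  have hM := ((sandwich.hasFDerivAt_of_bilinear (hasFDerivAt_id K₀) (hasFDerivAt_id K₀)).clm_apply
    (hasFDerivAt_const R K₀)).const_add Q
  obtain ⟨D, hD, hDeq⟩ := hasFDerivAt_tsum_pow_apply hT hM
    (Matrix.tendsto_smul_sandwich_pow_nhds_zero hγ hstab)
  have hP : Pval A B Q R γ = fun K => ∑' k,
      ((γ • sandwich (A - B * K) (A - B * K)) ^ k) (Q + sandwich K K R) := by
    funext K
    rw [Pval_eq_tsum_sandwich_pow_apply, Matrix.sandwich_apply]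
  refine ⟨D, hP ▸ hD, fun H => ?_⟩
  have h := hDeq H
  simp only [_root_.add_apply, _root_.smul_apply, Pi.smul_apply, ContinuousLinearMap.comp_zero,
    zero_add, ContinuousLinearMap.precompR_apply, ContinuousLinearMap.precompL_apply,
    ContinuousLinearMap.compL_apply, ContinuousLinearMap.comp_id, ContinuousLinearMap.flip_add,
    ContinuousLinearMap.flip_apply, ContinuousLinearMap.id_apply, ContinuousLinearMap.comp_apply,
    _root_.neg_apply, map_neg, LinearMap.coe_toContinuousLinearMap', mulLeftLinearMap_apply,
    Matrix.sandwich_apply, id_eq] at h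
  rw [← Pval_eq_tsum_sandwich_pow_apply] at h
  rw [h]
  have hPsymm := isSymm_Pval A B Q R γ hQ hR K₀
  simp only [Matrix.transpose_sub, Matrix.transpose_mul, Matrix.transpose_smul, hR.eq, hPsymm.eq,
    Matrix.transpose_transpose, Matrix.mul_sub, Matrix.sub_mul, Matrix.mul_smul, Matrix.smul_mul,
    Matrix.mul_assoc, smul_add, smul_neg]
  abel

theorem Matrix.eq_of_sub_smul_transpose_mul_mul_eq {ι : Type*} [Fintype ι] [DecidableEq ι]
    (hγ : 0 ≤ γ) {L : Matrix ι ι ℝ} (hL : √γ * specRad L < 1) {X Y : Matrix ι ι ℝ}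
    (h : X - γ • (Lᵀ * X * L) = Y - γ • (Lᵀ * Y * L)) : X = Y :=
  (eventually_summable_pow_of_tendsto (tendsto_smul_sandwich_pow_nhds_zero hγ hL)).self_of_nhds
    |>.eq_of_sub_apply_eq (by simpa using h)

end MatrixOperators

theorem stmt11_general {n m : ℕ}
    (A : Matrix (Fin n) (Fin n) ℝ) (B : Matrix (Fin n) (Fin m) ℝ)
    (Q : Matrix (Fin n) (Fin n) ℝ) (hQ : Q.IsSymm)
    (R : Matrix (Fin m) (Fin m) ℝ) (hR : R.IsSymm)
    (γ : ℝ) (hγ : γ ∈ Set.Ioo (0 : ℝ) 1)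
    (K₀ : Matrix (Fin m) (Fin n) ℝ)
    (hstab : Real.sqrt γ * specRad (A - B * K₀) < 1) :
    ∃ D : Matrix (Fin m) (Fin n) ℝ →L[ℝ] Matrix (Fin n) (Fin n) ℝ,
      HasFDerivAt (Pval A B Q R γ) D K₀ ∧
      ∀ H : Matrix (Fin m) (Fin n) ℝ,
        (D H - γ • ((A - B * K₀)ᵀ * D H * (A - B * K₀))
            = Hᵀ * (R * K₀ - γ • (Bᵀ * Pval A B Q R γ K₀ * (A - B * K₀)))
              + (R * K₀ - γ • (Bᵀ * Pval A B Q R γ K₀ * (A - B * K₀)))ᵀ * H) ∧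
        ∀ X : Matrix (Fin n) (Fin n) ℝ,
          X - γ • ((A - B * K₀)ᵀ * X * (A - B * K₀))
              = Hᵀ * (R * K₀ - γ • (Bᵀ * Pval A B Q R γ K₀ * (A - B * K₀)))
                + (R * K₀ - γ • (Bᵀ * Pval A B Q R γ K₀ * (A - B * K₀)))ᵀ * H →
            X = D H := by
  obtain ⟨D, hD, hDeq⟩ := exists_hasFDerivAt_Pval A B Q R hQ hR hγ.1.le K₀ hstab
  exact ⟨D, hD, fun H => ⟨hDeq H, fun X hX =>
    Matrix.eq_of_sub_smul_transpose_mul_mul_eq hγ.1.le hstab (hX.trans (hDeq H).symm)⟩⟩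

/-- If `√γ·ρ(A − BK₀) < 1`, then `K ↦ P(K)` is Fréchet differentiable at
`K₀`, and for every direction `H` the derivative `D[H]` is the unique matrix satisfying the
differential Lyapunov equation `D − γ A_{K₀}ᵀ D A_{K₀} = HᵀS + SᵀH`, where
`S = R K₀ − γ Bᵀ P(K₀) A_{K₀}` and `A_{K₀} = A − B K₀`. -/
theorem stmt11 {n m : ℕ} (hn : 1 ≤ n) (hm : 1 ≤ m)
    (A : Matrix (Fin n) (Fin n) ℝ) (B : Matrix (Fin n) (Fin m) ℝ)
    (Q : Matrix (Fin n) (Fin n) ℝ) (hQ : Q.IsSymm)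
    (R : Matrix (Fin m) (Fin m) ℝ) (hR : R.IsSymm)
    (γ : ℝ) (hγ : γ ∈ Set.Ioo (0 : ℝ) 1)
    (K₀ : Matrix (Fin m) (Fin n) ℝ)
    (hstab : Real.sqrt γ * specRad (A - B * K₀) < 1) :
    ∃ D : Matrix (Fin m) (Fin n) ℝ →L[ℝ] Matrix (Fin n) (Fin n) ℝ,
      HasFDerivAt (Pval A B Q R γ) D K₀ ∧
      ∀ H : Matrix (Fin m) (Fin n) ℝ,
        (D H - γ • ((A - B * K₀)ᵀ * D H * (A - B * K₀))
            = Hᵀ * (R * K₀ - γ • (Bᵀ * Pval A B Q R γ K₀ * (A - B * K₀)))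
              + (R * K₀ - γ • (Bᵀ * Pval A B Q R γ K₀ * (A - B * K₀)))ᵀ * H) ∧
        ∀ X : Matrix (Fin n) (Fin n) ℝ,
          X - γ • ((A - B * K₀)ᵀ * X * (A - B * K₀))
              = Hᵀ * (R * K₀ - γ • (Bᵀ * Pval A B Q R γ K₀ * (A - B * K₀)))
                + (R * K₀ - γ • (Bᵀ * Pval A B Q R γ K₀ * (A - B * K₀)))ᵀ * H →
            X = D H :=
  stmt11_general A B Q hQ R hR γ hγ K₀ hstab
end

section
/- Fix reals a, b, Q, R, σ₀, σ and γ ∈ (0,1), and set c := σ₀² + γσ²/(1−γ). For θ ∈ ℝ write A_θ := a − bθ, and for θ with γ·A_θ² < 1 define P(θ) := (Q + Rθ²)/(1 − γ A_θ²), Σ(θ) := c/(1 − γ A_θ²), and J(θ) := c·P(θ). Then at every θ with γ·A_θ² < 1 the performance function J is differentiable with J'(θ) = 2·Σ(θ)·(Rθ − γ·b·P(θ)·A_θ). -/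
/-! The value coefficient is the quotient `P = (Q + Rθ²)/D` with `D = 1 − γA_θ²`, and
`D' = 2γbA_θ`, so the quotient rule gives `P' = (2Rθ − P·D')/D = 2(Rθ − γbPA_θ)/D`;
multiplying by the constant `c` turns `c/D` into `Σ(θ)`. -/

theorem hasDerivAt_one_sub_mul_sub_mul_sq (γ a b θ : ℝ) :
    HasDerivAt (fun t : ℝ => 1 - γ * (a - b * t) ^ 2) (2 * γ * b * (a - b * θ)) θ := by
  have hA : HasDerivAt (fun t : ℝ => a - b * t) (-b) θ := by
    simpa using ((hasDerivAt_id θ).const_mul b).const_sub a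
  exact ((hA.pow 2).const_mul γ).const_sub 1 |>.congr_deriv (by ring)

theorem hasDerivAt_lqr_value (a b Q R γ θ : ℝ) (hD : 1 - γ * (a - b * θ) ^ 2 ≠ 0) :
    HasDerivAt (fun t : ℝ => (Q + R * t ^ 2) / (1 - γ * (a - b * t) ^ 2))
      (2 / (1 - γ * (a - b * θ) ^ 2) *
        (R * θ - γ * b * ((Q + R * θ ^ 2) / (1 - γ * (a - b * θ) ^ 2)) * (a - b * θ)))
      θ := by
  have hN : HasDerivAt (fun t : ℝ => Q + R * t ^ 2) (2 * R * θ) θ :=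
    ((hasDerivAt_pow 2 θ).const_mul R).const_add Q |>.congr_deriv (by ring)
  refine (hN.div (hasDerivAt_one_sub_mul_sub_mul_sq γ a b θ) hD).congr_deriv ?_
  generalize 1 - γ * (a - b * θ) ^ 2 = D at hD ⊢
  field_simp

theorem stmt13_general (a b Q R σ₀ σ γ : ℝ) (θ : ℝ)
    (hθ : γ * (a - b * θ) ^ 2 < 1) :
    HasDerivAt
      (fun t : ℝ => (σ₀ ^ 2 + γ * σ ^ 2 / (1 - γ)) *
        ((Q + R * t ^ 2) / (1 - γ * (a - b * t) ^ 2)))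
      (2 * ((σ₀ ^ 2 + γ * σ ^ 2 / (1 - γ)) / (1 - γ * (a - b * θ) ^ 2)) *
        (R * θ - γ * b * ((Q + R * θ ^ 2) / (1 - γ * (a - b * θ) ^ 2)) * (a - b * θ)))
      θ :=
  (hasDerivAt_lqr_value a b Q R γ θ (sub_pos.mpr hθ).ne').const_mul
    (σ₀ ^ 2 + γ * σ ^ 2 / (1 - γ)) |>.congr_deriv (by ring)

/-- Scalar discounted LQR: with `c = σ₀² + γσ²/(1−γ)`, `A_θ = a − bθ`,
`P(θ) = (Q + Rθ²)/(1 − γA_θ²)`, `Σ(θ) = c/(1 − γA_θ²)`, `J(θ) = c·P(θ)`, the performance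
function `J` is differentiable at every `γ`-stabilizing `θ` with
`J'(θ) = 2·Σ(θ)·(Rθ − γ·b·P(θ)·A_θ)`. -/
theorem stmt13 (a b Q R σ₀ σ γ : ℝ) (hγ : γ ∈ Set.Ioo (0 : ℝ) 1) (θ : ℝ)
    (hθ : γ * (a - b * θ) ^ 2 < 1) :
    HasDerivAt
      (fun t : ℝ => (σ₀ ^ 2 + γ * σ ^ 2 / (1 - γ)) *
        ((Q + R * t ^ 2) / (1 - γ * (a - b * t) ^ 2)))
      (2 * ((σ₀ ^ 2 + γ * σ ^ 2 / (1 - γ)) / (1 - γ * (a - b * θ) ^ 2)) *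
        (R * θ - γ * b * ((Q + R * θ ^ 2) / (1 - γ * (a - b * θ) ^ 2)) * (a - b * θ)))
      θ :=
  stmt13_general a b Q R σ₀ σ γ θ hθ
end

section
/- Fix reals a, b, Q, R, σ₀, σ and γ ∈ (0,1), and set c := σ₀² + γσ²/(1−γ). For θ ∈ ℝ write A_θ := a − bθ, and for θ with γ·A_θ² < 1 define P(θ) := (Q + Rθ²)/(1 − γ A_θ²), Σ(θ) := c/(1 − γ A_θ²), J(θ) := c·P(θ), the Gauss–Newton curvature H(θ) := 2·Σ(θ)·(R + γ·b²·P(θ)), and the distributional term Λ(θ) := −4·Σ(θ)·A_θ·b·P'(θ). Then at every θ with γ·A_θ² < 1 the function J is twice differentiable and the exact Hessian decomposes as J''(θ) = H(θ) + γ·Λ(θ). -/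
/-!
Writing `D = 1 - γA²` with `A = a - bθ`, the quotient rule for `P = (Q + Rθ²)/D` and
`D' = 2γbA` give `P'·D = 2(Rθ - γbAP)`. Differentiating this identity once more gives
`P''·D + P'·2γbA = 2(R + γb²P) - 2γbAP'`, i.e. `D·P'' = 2(R + γb²P) - 4γbAP'`; multiplying by
`c/D` is the decomposition `J'' = H + γΛ`.
-/

/-- Scalar discounted-LQR value coefficient `P(θ) = (Q + Rθ²)/(1 − γ(a − bθ)²)`. -/
noncomputable def Pscalar (a b Q R γ t : ℝ) : ℝ :=
  (Q + R * t ^ 2) / (1 - γ * (a - b * t) ^ 2)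

section Pscalar

variable (a b Q R γ : ℝ) {t : ℝ}

theorem hasDerivAt_one_sub_mul_sq (t : ℝ) :
    HasDerivAt (fun t : ℝ => 1 - γ * (a - b * t) ^ 2) (2 * γ * b * (a - b * t)) t := by
  have hA : HasDerivAt (fun t : ℝ => a - b * t) (-b) t := by
    simpa using ((hasDerivAt_id t).const_mul b).const_sub a
  refine (((hA.pow 2).const_mul γ).const_sub 1).congr_deriv ?_
  ring

theorem hasDerivAt_Pscalar (ht : 1 - γ * (a - b * t) ^ 2 ≠ 0) :
    HasDerivAt (Pscalar a b Q R γ)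
      (2 * (R * t - γ * b * (a - b * t) * Pscalar a b Q R γ t) / (1 - γ * (a - b * t) ^ 2)) t := by
  have hN : HasDerivAt (fun t : ℝ => Q + R * t ^ 2) (2 * R * t) t := by
    refine (((hasDerivAt_pow 2 t).const_mul R).const_add Q).congr_deriv ?_
    ring
  refine (hN.div (hasDerivAt_one_sub_mul_sq a b γ t) ht).congr_deriv ?_
  rw [Pscalar]
  -- the identity holds with the denominator as an atom; unfolding it derails `field_simp`
  generalize 1 - γ * (a - b * t) ^ 2 = D at ht ⊢
  field_simp

theorem deriv_Pscalar_eventuallyEq (ht : 1 - γ * (a - b * t) ^ 2 ≠ 0) :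
    deriv (Pscalar a b Q R γ) =ᶠ[nhds t] fun s =>
      2 * (R * s - γ * b * (a - b * s) * Pscalar a b Q R γ s) / (1 - γ * (a - b * s) ^ 2) := by
  have hD : ∀ᶠ s in nhds t, 1 - γ * (a - b * s) ^ 2 ≠ 0 :=
    (hasDerivAt_one_sub_mul_sq a b γ t).continuousAt.eventually_ne ht
  filter_upwards [hD] with s hs
  exact (hasDerivAt_Pscalar a b Q R γ hs).deriv

theorem hasDerivAt_deriv_Pscalar (ht : 1 - γ * (a - b * t) ^ 2 ≠ 0) :
    HasDerivAt (deriv (Pscalar a b Q R γ))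
      ((2 * (R + γ * b ^ 2 * Pscalar a b Q R γ t)
          - 4 * γ * b * (a - b * t) * deriv (Pscalar a b Q R γ) t)
        / (1 - γ * (a - b * t) ^ 2)) t := by
  have hP := hasDerivAt_Pscalar a b Q R γ ht
  have hA : HasDerivAt (fun s : ℝ => γ * b * (a - b * s)) (γ * b * -b) t := by
    simpa using (((hasDerivAt_id t).const_mul b).const_sub a).const_mul (γ * b)
  have hNum : HasDerivAt (fun s => 2 * (R * s - γ * b * (a - b * s) * Pscalar a b Q R γ s))
      (2 * (R - (γ * b * -b * Pscalar a b Q R γ t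
        + γ * b * (a - b * t) * deriv (Pscalar a b Q R γ) t))) t := by
    rw [hP.deriv]
    simpa using (((hasDerivAt_id t).const_mul R).sub (hA.mul hP)).const_mul 2
  have hQuot := hNum.div (hasDerivAt_one_sub_mul_sq a b γ t) ht
  refine (hQuot.congr_of_eventuallyEq (deriv_Pscalar_eventuallyEq a b Q R γ ht)).congr_deriv ?_
  rw [hP.deriv]
  generalize 1 - γ * (a - b * t) ^ 2 = D at ht ⊢
  field_simp
  ring

end Pscalar

theorem stmt14_general (a b Q R σ₀ σ γ : ℝ) (θ : ℝ)
    (hθ : γ * (a - b * θ) ^ 2 < 1) :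
    HasDerivAt
      (deriv (fun t : ℝ => (σ₀ ^ 2 + γ * σ ^ 2 / (1 - γ)) * Pscalar a b Q R γ t))
      (2 * ((σ₀ ^ 2 + γ * σ ^ 2 / (1 - γ)) / (1 - γ * (a - b * θ) ^ 2)) *
          (R + γ * b ^ 2 * Pscalar a b Q R γ θ)
        + γ * (-4 * ((σ₀ ^ 2 + γ * σ ^ 2 / (1 - γ)) / (1 - γ * (a - b * θ) ^ 2)) *
            (a - b * θ) * b * deriv (Pscalar a b Q R γ) θ))
      θ := by
  have hD : 1 - γ * (a - b * θ) ^ 2 ≠ 0 := by linarith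
  rw [deriv_const_mul_field']
  refine ((hasDerivAt_deriv_Pscalar a b Q R γ hD).const_mul _).congr_deriv ?_
  generalize 1 - γ * (a - b * θ) ^ 2 = D at hD ⊢
  field_simp
  ring

/-- Scalar discounted LQR: with `c = σ₀² + γσ²/(1−γ)`, `A_θ = a − bθ`,
`P(θ) = (Q + Rθ²)/(1 − γA_θ²)`, `Σ(θ) = c/(1 − γA_θ²)`, `J(θ) = c·P(θ)`,
Gauss–Newton curvature `H(θ) = 2Σ(θ)(R + γb²P(θ))`, and distributional term
`Λ(θ) = −4Σ(θ)·A_θ·b·P'(θ)`, at every `γ`-stabilizing `θ` the function `J` is twice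
differentiable and `J''(θ) = H(θ) + γ·Λ(θ)`. -/
theorem stmt14 (a b Q R σ₀ σ γ : ℝ) (hγ : γ ∈ Set.Ioo (0 : ℝ) 1) (θ : ℝ)
    (hθ : γ * (a - b * θ) ^ 2 < 1) :
    HasDerivAt
      (deriv (fun t : ℝ => (σ₀ ^ 2 + γ * σ ^ 2 / (1 - γ)) * Pscalar a b Q R γ t))
      (2 * ((σ₀ ^ 2 + γ * σ ^ 2 / (1 - γ)) / (1 - γ * (a - b * θ) ^ 2)) *
          (R + γ * b ^ 2 * Pscalar a b Q R γ θ)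
        + γ * (-4 * ((σ₀ ^ 2 + γ * σ ^ 2 / (1 - γ)) / (1 - γ * (a - b * θ) ^ 2)) *
            (a - b * θ) * b * deriv (Pscalar a b Q R γ) θ))
      θ :=
  stmt14_general a b Q R σ₀ σ γ θ hθ
end
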